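/- Fix an integer N ≥ 3, a real L ≥ 0, and an index k ∈ {1,…,N}, with index arithmetic modulo N in {1,…,N}. Let W_1, …, W_N be mutually independent finite-valued random variables with H(W_j) = L for each j, let Q be a finite-valued random variable with I(⟨W_1,…,W_N⟩ ; Q) = 0, and let A_n^{[k]}, A_k^{[k−1]}, A_{k+1}^{[k+1]} (n ∈ {1,…,N}) be finite-valued random variables satisfying: (i) H(A_n^{[k]} | ⟨W_n, W_{n−1}, Q⟩) = 0 for all n; (ii) H(W_k | ⟨A_1^{[k]}, …, A_N^{[k]}, Q⟩) = 0; (iii) H(A_k^{[k]} | ⟨W_k, Q⟩) = H(A_k^{[k−1]} | ⟨W_k, Q⟩) and H(A_{k+1}^{[k]} | ⟨W_k, W_{k−1}, Q⟩) = H(A_{k+1}^{[k+1]} | ⟨W_k, W_{k−1}, Q⟩). Then ∑_{n=1}^{N} H(A_n^{[k]} | Q) ≥ L + H(A_k^{[k−1]} | ⟨W_k, Q⟩) + H(A_{k+1}^{[k+1]} | ⟨W_k, W_{k−1}, Q⟩). -/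

import Mathlib

open MeasureTheory

/-- Shannon entropy (in nats) of a random variable `X` taking finitely many values,
with the convention `0 log 0 = 0`. -/
noncomputable def entropy {Ω : Type*} [MeasurableSpace Ω] {S : Type*} [Fintype S]
    (μ : Measure Ω) (X : Ω → S) : ℝ :=
  -∑ s : S, (μ (X ⁻¹' {s})).toReal * Real.log (μ (X ⁻¹' {s})).toReal

/-- Conditional entropy `H(X | Y)`, defined via the chain rule `H(X | Y) = H(X, Y) − H(Y)`. -/
noncomputable def condEntropy {Ω : Type*} [MeasurableSpace Ω] {S T : Type*} [Fintype S]
    [Fintype T] (μ : Measure Ω) (X : Ω → S) (Y : Ω → T) : ℝ :=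
  entropy μ (fun ω => (X ω, Y ω)) - entropy μ Y

/-- Mutual information `I(X ; Y) = H(X) − H(X | Y)`. -/
noncomputable def mutualInfo {Ω : Type*} [MeasurableSpace Ω] {S T : Type*} [Fintype S]
    [Fintype T] (μ : Measure Ω) (X : Ω → S) (Y : Ω → T) : ℝ :=
  entropy μ X - condEntropy μ X Y

/-- Conditional mutual information `I(X ; Y | Z) = H(X | Z) + H(Y | Z) − H(X, Y | Z)`. -/
noncomputable def condMutualInfo {Ω : Type*} [MeasurableSpace Ω] {S T U : Type*} [Fintype S]
    [Fintype T] [Fintype U] (μ : Measure Ω) (X : Ω → S) (Y : Ω → T) (Z : Ω → U) : ℝ :=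
  condEntropy μ X Z + condEntropy μ Y Z - condEntropy μ (fun ω => (X ω, Y ω)) Z

open ProbabilityTheory

/-! All the Shannon inequalities needed come from submodularity of entropy, which, fibre by fibre
of the common variable, is the inequality `log x ≤ x - 1` summed against the joint distribution.

Subadditivity bounds the total download by `H(A_1, …, A_N | Q)`. Since `W_k` is decodable, this
equals `H(W_k | Q) + H(A | W_k, Q)`; the first term is at least `L` because the queries are
independent of the messages. Keeping only the answers of servers `k` and `k + 1`, the second term
is at least `H(A_k | W_k, Q) + H(A_{k+1} | A_k, W_k, Q)`, and conditioning further on `W_{k-1}`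
makes `A_k` a function of the conditioning variables, leaving `H(A_{k+1} | W_k, W_{k-1}, Q)`. The
privacy swaps then turn the two answer terms into the ones of the statement. -/

open Real

namespace Real

lemma negMulLog_sum_le {ι : Type*} (s : Finset ι) {a : ι → ℝ} (ha : ∀ i ∈ s, 0 ≤ a i) :
    negMulLog (∑ i ∈ s, a i) ≤ ∑ i ∈ s, negMulLog (a i) := by
  rw [negMulLog, neg_mul, Finset.sum_mul, ← Finset.sum_neg_distrib]
  refine Finset.sum_le_sum fun i hi => ?_
  rcases (ha i hi).eq_or_lt with h | h
  · simp [← h]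
  · rw [negMulLog, neg_mul, neg_le_neg_iff]
    exact mul_le_mul_of_nonneg_left (log_le_log h (Finset.single_le_sum ha hi)) h.le

lemma negMulLog_add_mul_log_le {p q m r : ℝ} (hp : 0 ≤ p) (hpq : p ≤ q) (hpm : p ≤ m)
    (hqr : q ≤ r) :
    negMulLog p + p * log q + p * log m - p * log r ≤ q * m / r - p := by
  rcases hp.eq_or_lt with rfl | hp
  · have : 0 ≤ r := hpq.trans hqr
    simp only [negMulLog_zero, zero_mul, add_zero, sub_zero]
    positivity
  have hq := hp.trans_le hpq
  have hm := hp.trans_le hpm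
  have hr := hq.trans_le hqr
  calc negMulLog p + p * log q + p * log m - p * log r
      = p * log (q * m / (p * r)) := by
        rw [log_div (by positivity) (by positivity), log_mul hq.ne' hm.ne',
          log_mul hp.ne' hr.ne', negMulLog]
        ring
    _ ≤ p * (q * m / (p * r) - 1) := by gcongr; exact log_le_sub_one_of_pos (by positivity)
    _ = q * m / r - p := by field_simp

/-- Submodularity `H(S, T) + H(∅) ≤ H(S) + H(T)` for an unnormalised distribution `p` on `S × T`:
summed over `s` and `t`, the right-hand sides of `negMulLog_add_mul_log_le` cancel. -/
theorem sum_negMulLog_add_negMulLog_sum_le {S T : Type*} [Fintype S] [Fintype T]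
    (p : S → T → ℝ) (hp : ∀ s t, 0 ≤ p s t) :
    ∑ s, ∑ t, negMulLog (p s t) + negMulLog (∑ s, ∑ t, p s t)
      ≤ ∑ s, negMulLog (∑ t, p s t) + ∑ t, negMulLog (∑ s, p s t) := by
  set q := fun s => ∑ t, p s t with hq
  set m := fun t => ∑ s, p s t
  set r := ∑ s, q s
  have hmr : ∑ t, m t = r := Finset.sum_comm
  have gibbs : ∑ s, ∑ t, (negMulLog (p s t) + p s t * log (q s) + p s t * log (m t)
      - p s t * log r) ≤ ∑ s, ∑ t, (q s * m t / r - p s t) :=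
    Finset.sum_le_sum fun s _ => Finset.sum_le_sum fun t _ =>
      negMulLog_add_mul_log_le (hp s t)
        (Finset.single_le_sum (fun t _ => hp s t) (Finset.mem_univ t))
        (Finset.single_le_sum (fun s _ => hp s t) (Finset.mem_univ s))
        (Finset.single_le_sum (fun s _ => Finset.sum_nonneg fun t _ => hp s t)
          (Finset.mem_univ s))
  have total : ∑ s, ∑ t, (q s * m t / r - p s t) = 0 := by
    simp only [Finset.sum_sub_distrib, mul_div_assoc, ← Finset.mul_sum, ← Finset.sum_div,
      ← Finset.sum_mul, hmr, ← hq]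
    rw [← mul_div_assoc, mul_self_div_self, sub_self]
  have expand : ∑ s, ∑ t, (negMulLog (p s t) + p s t * log (q s) + p s t * log (m t)
      - p s t * log r) = ∑ s, ∑ t, negMulLog (p s t) + ∑ s, q s * log (q s)
        + ∑ t, m t * log (m t) - r * log r := by
    simp only [Finset.sum_sub_distrib, Finset.sum_add_distrib, ← Finset.sum_mul]
    rw [Finset.sum_comm (f := fun s t => p s t * log (m t))]
    simp only [← Finset.sum_mul]
    rfl
  suffices ∑ s, ∑ t, negMulLog (p s t) + negMulLog r
      ≤ ∑ s, negMulLog (q s) + ∑ t, negMulLog (m t) from this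
  simp only [negMulLog_eq_neg, Finset.sum_neg_distrib] at gibbs expand ⊢
  linarith

end Real

lemma entropy_eq_sum_negMulLog {Ω S : Type*} [MeasurableSpace Ω] (μ : Measure Ω) [Fintype S]
    (X : Ω → S) : entropy μ X = ∑ s, negMulLog (μ.real (X ⁻¹' {s})) := by
  simp [entropy, negMulLog, measureReal_def]

section Entropy

variable {Ω : Type*} [MeasurableSpace Ω] {μ : Measure Ω} [IsFiniteMeasure μ]

lemma measureReal_eq_sum_inter_preimage_singleton {T : Type*} [Fintype T] [MeasurableSpace T]
    [MeasurableSingletonClass T] (A : Set Ω) {Y : Ω → T} (hY : Measurable Y) :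
    μ.real A = ∑ t, μ.real (A ∩ Y ⁻¹' {t}) := by
  have h := sum_measureReal_preimage_singleton (μ := μ.restrict A) Finset.univ
    (fun t _ => hY (measurableSet_singleton t))
  simp only [Finset.coe_univ, Set.preimage_univ, measureReal_restrict_apply_univ] at h
  rw [← h]
  refine Finset.sum_congr rfl fun t _ => ?_
  rw [measureReal_restrict_apply (hY (measurableSet_singleton t)), Set.inter_comm]

lemma measureReal_comp_preimage_singleton {S T : Type*} [Fintype S] [MeasurableSpace S]
    [MeasurableSingletonClass S] [DecidableEq T] {X : Ω → S} (hX : Measurable X) (f : S → T)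
    (t : T) :
    μ.real ((fun ω => f (X ω)) ⁻¹' {t})
      = ∑ s ∈ Finset.univ.filter (fun s => f s = t), μ.real (X ⁻¹' {s}) := by
  rw [sum_measureReal_preimage_singleton _ fun s _ => hX (measurableSet_singleton s)]
  congr 1
  ext ω
  simp

theorem entropy_comp_le {S T : Type*} [Fintype S] [MeasurableSpace S]
    [MeasurableSingletonClass S] [Fintype T] {X : Ω → S} (hX : Measurable X) (f : S → T) :
    entropy μ (fun ω => f (X ω)) ≤ entropy μ X := by
  classical
  rw [entropy_eq_sum_negMulLog, entropy_eq_sum_negMulLog,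
    ← Finset.sum_fiberwise Finset.univ f]
  refine Finset.sum_le_sum fun t _ => ?_
  rw [measureReal_comp_preimage_singleton hX f t]
  exact negMulLog_sum_le _ fun s _ => measureReal_nonneg

variable {S T U : Type*} [Fintype S] [Fintype T] [Fintype U]
  [MeasurableSpace S] [MeasurableSingletonClass S] [MeasurableSpace T] [MeasurableSingletonClass T]
  {X : Ω → S} {Y : Ω → T} {Z : Ω → U}

theorem entropy_eq_of_comp (hX : Measurable X) (hY : Measurable Y) (f : T → S) (g : S → T)
    (hXY : ∀ ω, X ω = f (Y ω)) (hYX : ∀ ω, Y ω = g (X ω)) : entropy μ X = entropy μ Y := by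
  refine le_antisymm ?_ ?_
  · simpa only [← hXY] using entropy_comp_le (μ := μ) hY f
  · simpa only [← hYX] using entropy_comp_le (μ := μ) hX g

theorem entropy_submodular (hX : Measurable X) (hY : Measurable Y) :
    entropy μ (fun ω => (Z ω, X ω, Y ω)) + entropy μ Z
      ≤ entropy μ (fun ω => (Z ω, X ω)) + entropy μ (fun ω => (Z ω, Y ω)) := by
  set p : U → S → T → ℝ := fun u s t => μ.real (Z ⁻¹' {u} ∩ (X ⁻¹' {s} ∩ Y ⁻¹' {t}))
  have hsplitX (A : Set Ω) := measureReal_eq_sum_inter_preimage_singleton (μ := μ) A hX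
  have hsplitY (A : Set Ω) := measureReal_eq_sum_inter_preimage_singleton (μ := μ) A hY
  have hZXY : entropy μ (fun ω => (Z ω, X ω, Y ω)) = ∑ u, ∑ s, ∑ t, negMulLog (p u s t) := by
    simp only [entropy_eq_sum_negMulLog, Fintype.sum_prod_type, ← Set.singleton_prod_singleton,
      Set.mk_preimage_prod, p]
  have hZX : entropy μ (fun ω => (Z ω, X ω)) = ∑ u, ∑ s, negMulLog (∑ t, p u s t) := by
    simp only [entropy_eq_sum_negMulLog, Fintype.sum_prod_type, ← Set.singleton_prod_singleton,
      Set.mk_preimage_prod, p, ← Set.inter_assoc, ← hsplitY]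
  have hZY : entropy μ (fun ω => (Z ω, Y ω)) = ∑ u, ∑ t, negMulLog (∑ s, p u s t) := by
    simp only [entropy_eq_sum_negMulLog, Fintype.sum_prod_type, ← Set.singleton_prod_singleton,
      Set.mk_preimage_prod, p, ← Set.inter_assoc, Set.inter_right_comm (Z ⁻¹' _) (X ⁻¹' _),
      ← hsplitX]
  have hZ : entropy μ Z = ∑ u, negMulLog (∑ s, ∑ t, p u s t) := by
    simp only [entropy_eq_sum_negMulLog, p, ← Set.inter_assoc, ← hsplitY, ← hsplitX]
  rw [hZXY, hZ, hZX, hZY, ← Finset.sum_add_distrib, ← Finset.sum_add_distrib]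
  exact Finset.sum_le_sum fun u _ =>
    sum_negMulLog_add_negMulLog_sum_le (p u) fun s t => measureReal_nonneg

variable [MeasurableSpace U] [MeasurableSingletonClass U]

theorem condEntropy_nonneg (hX : Measurable X) (hY : Measurable Y) : 0 ≤ condEntropy μ X Y :=
  sub_nonneg.2 (entropy_comp_le (hX.prodMk hY) Prod.snd)

theorem condEntropy_comp_le {V : Type*} [Fintype V] (hX : Measurable X) (hZ : Measurable Z)
    (f : S → V) :
    condEntropy μ (fun ω => f (X ω)) Z ≤ condEntropy μ X Z :=
  sub_le_sub_right (entropy_comp_le (hX.prodMk hZ) (Prod.map f id)) _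

theorem condEntropy_comp_self (hZ : Measurable Z) (f : U → S) :
    condEntropy μ (fun ω => f (Z ω)) Z = 0 :=
  sub_eq_zero.2 <| entropy_eq_of_comp ((measurable_of_countable f).comp hZ |>.prodMk hZ) hZ
    (fun u => (f u, u)) Prod.snd (fun _ => rfl) (fun _ => rfl)

theorem condEntropy_le_condEntropy_comp (hX : Measurable X) (hY : Measurable Y) (f : T → U) :
    condEntropy μ X Y ≤ condEntropy μ X (fun ω => f (Y ω)) := by
  have hfY : Measurable fun ω => f (Y ω) := (measurable_of_countable f).comp hY
  have h := entropy_submodular (μ := μ) (Z := fun ω => f (Y ω)) hX hY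
  rw [entropy_eq_of_comp (hfY.prodMk (hX.prodMk hY)) (hX.prodMk hY)
      (fun p => (f p.2, p)) Prod.snd (fun _ => rfl) (fun _ => rfl),
    entropy_eq_of_comp (hfY.prodMk hY) hY (fun t => (f t, t)) Prod.snd (fun _ => rfl)
      (fun _ => rfl),
    entropy_eq_of_comp (hfY.prodMk hX) (hX.prodMk hfY) Prod.swap Prod.swap
      (fun _ => rfl) (fun _ => rfl)] at h
  rw [condEntropy, condEntropy]
  linarith

theorem condEntropy_pair_eq_add (hX : Measurable X) (hY : Measurable Y) (hZ : Measurable Z) :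
    condEntropy μ (fun ω => (X ω, Y ω)) Z
      = condEntropy μ X Z + condEntropy μ Y (fun ω => (X ω, Z ω)) := by
  have h := entropy_eq_of_comp (μ := μ) ((hX.prodMk hY).prodMk hZ) (hY.prodMk (hX.prodMk hZ))
    (fun p => ((p.2.1, p.1), p.2.2)) (fun p => (p.1.2, p.1.1, p.2)) (fun _ => rfl) (fun _ => rfl)
  simp only [condEntropy, h]
  ring

theorem condEntropy_add_condEntropy_comm (hX : Measurable X) (hY : Measurable Y)
    (hZ : Measurable Z) :
    condEntropy μ X Z + condEntropy μ Y (fun ω => (X ω, Z ω))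
      = condEntropy μ Y Z + condEntropy μ X (fun ω => (Y ω, Z ω)) := by
  have h := entropy_eq_of_comp (μ := μ) (hY.prodMk (hX.prodMk hZ)) (hX.prodMk (hY.prodMk hZ))
    (fun p => (p.2.1, p.1, p.2.2)) (fun p => (p.2.1, p.1, p.2.2)) (fun _ => rfl) (fun _ => rfl)
  simp only [condEntropy, h]
  ring

theorem condEntropy_pair_le (hX : Measurable X) (hY : Measurable Y) (hZ : Measurable Z) :
    condEntropy μ (fun ω => (X ω, Y ω)) Z ≤ condEntropy μ X Z + condEntropy μ Y Z := by
  rw [condEntropy_pair_eq_add hX hY hZ]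
  gcongr
  exact condEntropy_le_condEntropy_comp hY (hX.prodMk hZ) Prod.snd

theorem condEntropy_cond_pair_of_condEntropy_eq_zero (hX : Measurable X) (hY : Measurable Y)
    (hZ : Measurable Z) (hYZ : condEntropy μ Y Z = 0) :
    condEntropy μ X (fun ω => (Y ω, Z ω)) = condEntropy μ X Z := by
  have h := condEntropy_add_condEntropy_comm (μ := μ) hX hY hZ
  have h0 := condEntropy_nonneg (μ := μ) hY (hX.prodMk hZ)
  have h1 := condEntropy_le_condEntropy_comp (μ := μ) hY (hX.prodMk hZ) Prod.snd
  linarith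

theorem condEntropy_pi_le_sum {n : ℕ} {X : Fin n → Ω → S} (hX : ∀ i, Measurable (X i))
    (hZ : Measurable Z) :
    condEntropy μ (fun ω i => X i ω) Z ≤ ∑ i, condEntropy μ (X i) Z := by
  induction n with
  | zero =>
    rw [Finset.univ_eq_empty, Finset.sum_empty,
      ← condEntropy_comp_self (μ := μ) hZ fun _ => (finZeroElim : Fin 0 → S)]
    exact le_of_eq (congrArg (condEntropy μ · Z) (funext fun _ => Subsingleton.elim _ _))
  | succ n ih =>
    have htail : Measurable fun ω (i : Fin n) => X i.succ ω :=
      measurable_pi_lambda _ fun i => hX i.succ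
    have hcons : (fun ω i => X i ω)
        = fun ω => (Fin.cons (X 0 ω) (fun i => X i.succ ω) : Fin (n + 1) → S) :=
      funext fun ω => (Fin.cons_self_tail _).symm
    calc condEntropy μ (fun ω i => X i ω) Z
        ≤ condEntropy μ (fun ω => (X 0 ω, fun i : Fin n => X i.succ ω)) Z := by
          rw [hcons]
          exact condEntropy_comp_le ((hX 0).prodMk htail) hZ
            (fun p : S × (Fin n → S) => (Fin.cons p.1 p.2 : Fin (n + 1) → S))
      _ ≤ condEntropy μ (X 0) Z + condEntropy μ (fun ω (i : Fin n) => X i.succ ω) Z :=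
          condEntropy_pair_le (hX 0) htail hZ
      _ ≤ ∑ i, condEntropy μ (X i) Z := by
          rw [Fin.sum_univ_succ]
          gcongr
          exact ih fun i => hX i.succ

theorem mutualInfo_comp_le (hX : Measurable X) (hY : Measurable Y) (f : S → U) :
    mutualInfo μ (fun ω => f (X ω)) Y ≤ mutualInfo μ X Y := by
  have hfX : Measurable fun ω => f (X ω) := (measurable_of_countable f).comp hX
  have h := entropy_submodular (μ := μ) (Z := fun ω => f (X ω)) hX hY
  rw [entropy_eq_of_comp (hfX.prodMk (hX.prodMk hY)) (hX.prodMk hY)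
      (fun p => (f p.1, p)) Prod.snd (fun _ => rfl) (fun _ => rfl),
    entropy_eq_of_comp (hfX.prodMk hX) hX (fun s => (f s, s)) Prod.snd (fun _ => rfl)
      (fun _ => rfl)] at h
  simp only [mutualInfo, condEntropy]
  linarith

end Entropy

theorem stmt_11_general {Ω : Type*} [MeasurableSpace Ω] (μ : Measure Ω) [IsProbabilityMeasure μ]
    (N : ℕ) [NeZero N] (L : ℝ) (k : Fin N)
    {σ β α : Type*} [Fintype σ] [Fintype β] [Fintype α]
    [MeasurableSpace σ] [MeasurableSingletonClass σ]
    [MeasurableSpace β] [MeasurableSingletonClass β]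
    [MeasurableSpace α] [MeasurableSingletonClass α]
    (W : Fin N → Ω → σ) (Q : Ω → β) (A : Fin N → Ω → α) (Akm Akp : Ω → α)
    (hWmeas : ∀ j, Measurable (W j)) (hQmeas : Measurable Q)
    (hAmeas : ∀ n, Measurable (A n))
    (hWent : ∀ j, entropy μ (W j) = L)
    (hQindep : mutualInfo μ (fun ω => (fun j => W j ω)) Q = 0)
    (hdet : ∀ n, condEntropy μ (A n) (fun ω => (W n ω, W (n - 1) ω, Q ω)) = 0)
    (hdec : condEntropy μ (W k) (fun ω => ((fun n => A n ω), Q ω)) = 0)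
    (hpriv1 : condEntropy μ (A k) (fun ω => (W k ω, Q ω))
      = condEntropy μ Akm (fun ω => (W k ω, Q ω)))
    (hpriv2 : condEntropy μ (A (k + 1)) (fun ω => (W k ω, W (k - 1) ω, Q ω))
      = condEntropy μ Akp (fun ω => (W k ω, W (k - 1) ω, Q ω))) :
    ∑ n : Fin N, condEntropy μ (A n) Q
      ≥ L + condEntropy μ Akm (fun ω => (W k ω, Q ω))
        + condEntropy μ Akp (fun ω => (W k ω, W (k - 1) ω, Q ω)) := by
  have hWk := hWmeas k
  have hAT : Measurable fun ω n => A n ω := measurable_pi_lambda _ hAmeas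
  have hWkQ : Measurable fun ω => (W k ω, Q ω) := hWk.prodMk hQmeas
  have hWkWk'Q : Measurable fun ω => (W k ω, W (k - 1) ω, Q ω) :=
    hWk.prodMk ((hWmeas (k - 1)).prodMk hQmeas)
  have hmsg : L ≤ condEntropy μ (W k) Q := by
    have h := mutualInfo_comp_le (μ := μ) (measurable_pi_lambda _ hWmeas) hQmeas fun w => w k
    rw [hQindep, mutualInfo, hWent k] at h
    linarith
  have hsub := condEntropy_pi_le_sum (μ := μ) hAmeas hQmeas
  have hdecode := condEntropy_add_condEntropy_comm (μ := μ) hAT hWk hQmeas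
  have hproj := condEntropy_comp_le (μ := μ) hAT hWkQ fun a => (a k, a (k + 1))
  have hchain := condEntropy_pair_eq_add (μ := μ) (hAmeas k) (hAmeas (k + 1)) hWkQ
  have hcond := condEntropy_le_condEntropy_comp (μ := μ) (hAmeas (k + 1))
    ((hAmeas k).prodMk hWkWk'Q) fun x => (x.1, x.2.1, x.2.2.2)
  have hdrop := condEntropy_cond_pair_of_condEntropy_eq_zero (μ := μ) (hAmeas (k + 1)) (hAmeas k)
    hWkWk'Q (hdet k)
  rw [hdec] at hdecode
  rw [ge_iff_le, ← hpriv1, ← hpriv2]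
  linarith

/-- Per-message download lower bound in the converse for local PIR on the cyclic graph `C_N`
(server `n` stores `W_n, W_{n−1}`, indices mod `N`, realized on `Fin N`): for a fixed desired
index `k`, if the messages are mutually independent with `H(W_j) = L`, the queries `Q` are
independent of the messages, each answer `A_n^{[k]}` (here `A n`) is a deterministic function
of `(W_n, W_{n−1}, Q)`, `W_k` is decodable from all the answers and `Q`, and the privacy-swap
equalities `H(A_k^{[k]} | W_k, Q) = H(A_k^{[k−1]} | W_k, Q)` and
`H(A_{k+1}^{[k]} | W_k, W_{k−1}, Q) = H(A_{k+1}^{[k+1]} | W_k, W_{k−1}, Q)` hold, then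
`∑_n H(A_n^{[k]} | Q) ≥ L + H(A_k^{[k−1]} | W_k, Q) + H(A_{k+1}^{[k+1]} | W_k, W_{k−1}, Q)`. -/
theorem stmt_11 {Ω : Type*} [MeasurableSpace Ω] (μ : Measure Ω) [IsProbabilityMeasure μ]
    (N : ℕ) [NeZero N] (hN : 3 ≤ N) (L : ℝ) (hL : 0 ≤ L) (k : Fin N)
    {σ β α : Type*} [Fintype σ] [Fintype β] [Fintype α]
    [MeasurableSpace σ] [MeasurableSingletonClass σ]
    [MeasurableSpace β] [MeasurableSingletonClass β]
    [MeasurableSpace α] [MeasurableSingletonClass α]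
    (W : Fin N → Ω → σ) (Q : Ω → β) (A : Fin N → Ω → α) (Akm Akp : Ω → α)
    (hWmeas : ∀ j, Measurable (W j)) (hQmeas : Measurable Q)
    (hAmeas : ∀ n, Measurable (A n)) (hAkm : Measurable Akm) (hAkp : Measurable Akp)
    (hWindep : iIndepFun W μ)
    (hWent : ∀ j, entropy μ (W j) = L)
    (hQindep : mutualInfo μ (fun ω => (fun j => W j ω)) Q = 0)
    (hdet : ∀ n, condEntropy μ (A n) (fun ω => (W n ω, W (n - 1) ω, Q ω)) = 0)
    (hdec : condEntropy μ (W k) (fun ω => ((fun n => A n ω), Q ω)) = 0)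
    (hpriv1 : condEntropy μ (A k) (fun ω => (W k ω, Q ω))
      = condEntropy μ Akm (fun ω => (W k ω, Q ω)))
    (hpriv2 : condEntropy μ (A (k + 1)) (fun ω => (W k ω, W (k - 1) ω, Q ω))
      = condEntropy μ Akp (fun ω => (W k ω, W (k - 1) ω, Q ω))) :
    ∑ n : Fin N, condEntropy μ (A n) Q
      ≥ L + condEntropy μ Akm (fun ω => (W k ω, Q ω))
        + condEntropy μ Akp (fun ω => (W k ω, W (k - 1) ω, Q ω)) :=
  stmt_11_general μ N L k W Q A Akm Akp hWmeas hQmeas hAmeas hWent hQindep hdet hdec hpriv1 hpriv2
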